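/- arXiv:1112.5647 — 2 statements merged into one kernel-verified Lean document; each statement's English description precedes it below -/
import Mathlib

section
/- Let G=(V,E) be a finite graph of maximum degree 3, let n be a positive integer, let x be a real number, and let μ be a probability measure on R^n whose moments satisfy E[s^α]=0, E[s^α s^β]=δ_{αβ}/n, and E[s^α s^β s^γ]=0 for all component indices α,β,γ. If (s_i)_{i∈V} are i.i.d. with law μ, then E[∏_{ij∈E}(1 + n x s_i·s_j)] = Σ_{A∈C(G)} n^{c(A)} x^{|A|}. -/
open SimpleGraph MeasureTheory

variable {V : Type*}

/-- Degree of a vertex `v` in the spanning subgraph `(V, A)`: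
the number of edges of `A` incident to `v`. -/
def degIn [DecidableEq V] (A : Finset (Sym2 V)) (v : V) : ℕ :=
  (A.filter fun e => v ∈ e).card

/-- The cyclomatic number of the spanning subgraph `(V, A)`: the minimum number of edges
whose removal from `(V, A)` leaves an acyclic graph. -/
noncomputable def cyclomatic [DecidableEq V] (A : Finset (Sym2 V)) : ℕ :=
  sInf {k | ∃ B ⊆ A, B.card = k ∧
    (SimpleGraph.fromEdgeSet ((A \ B : Finset (Sym2 V)) : Set (Sym2 V))).IsAcyclic}

/-!
Expanding the product over edges, and each inner product over coordinates, writes the integrand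
as `∑_{A ⊆ E} (n x)^|A| ∑_c ∏_v ∏_{e ∈ A, v ∈ e} s_v^{c(e)}`, summed over colourings
`c : A → Fin n`. By independence the expectation of each monomial factorises over the vertices
into moments of `μ` of order `deg_A v ≤ 3`. Odd moments vanish, so only Eulerian `A` survive;
their vertices have degree `0` or `2`, and a degree-`2` vertex contributes `δ/n`, which forces `c`
to be constant on the components of `A`. Hence `A` contributes `x^|A|` times the number `n^k` of
such colourings, `k` the number of components. For a disjoint union of cycles `k` is the
cyclomatic number: deleting one edge per cycle leaves a forest, while a cycle left intact has no
leaf, so every acyclic remainder has lost an edge of each cycle.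
-/

open Finset

theorem SimpleGraph.IsAcyclic.exists_existsUnique_adj {W : Type*} [Finite W] {G : SimpleGraph W}
    (hG : G.IsAcyclic) (hE : G.edgeSet.Nonempty) : ∃ v, ∃! w, G.Adj v w := by
  obtain ⟨e, he⟩ := hE
  induction e using Sym2.ind with | h a b => ?_
  rw [mem_edgeSet] at he
  have : Nonempty W := ⟨a⟩
  obtain ⟨u, v, p, hp, hmax⟩ := Walk.exists_isPath_forall_isPath_length_le_length G
  have hnil : ¬ p.Nil := by
    intro h
    have := hmax a b (Walk.cons he Walk.nil) (Path.singleton he).property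
    rw [Walk.length_eq_zero_iff.2 h, Walk.length_cons, Walk.length_nil] at this
    omega
  refine ⟨u, p.snd, p.adj_snd hnil, fun w hadj => hG.eq_snd_of_adj_start hp hadj ?_⟩
  by_contra hw
  have := hmax _ _ (p.cons hadj.symm) (hp.cons hw)
  simp at this

theorem SimpleGraph.Walk.IsCycle.exists_mem_edges_ne {W : Type*} {G : SimpleGraph W} {u v : W}
    {c : G.Walk u u} (hc : c.IsCycle) {e : Sym2 W} (he : e ∈ c.edges) (hv : v ∈ e) :
    ∃ f ∈ c.edges, f ≠ e ∧ v ∈ f := by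
  classical
  by_contra! h
  have heven : Even (c.edges.countP (v ∈ ·)) :=
    (hc.isTrail.even_countP_edges_iff v).2 fun h => (h rfl).elim
  have hle : c.edges.countP (v ∈ ·) ≤ c.edges.count e := by
    rw [List.count_eq_countP]
    exact List.countP_mono_left fun f hf hvf => by
      simpa using not_not.1 fun hne => h f hf hne (by simpa using hvf)
  have hpos : 0 < c.edges.countP (v ∈ ·) := List.countP_pos_iff.2 ⟨e, he, by simpa using hv⟩
  have hone : c.edges.count e = 1 := List.count_eq_one_of_mem hc.edges_nodup he
  obtain ⟨k, hk⟩ := heven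
  omega

/-- The classes are the edge sets of the connected components of `(V, A)` that carry an edge. -/
def edgeComponentSetoid (A : Finset (Sym2 V)) : Setoid A :=
  Relation.EqvGen.setoid fun a b => ∃ v, v ∈ a.1 ∧ v ∈ b.1

lemma edgeComponentSetoid_le_iff {A : Finset (Sym2 V)} {r : Setoid A} :
    edgeComponentSetoid A ≤ r ↔ ∀ (a b : A) (v : V), v ∈ a.1 → v ∈ b.1 → r a b :=
  ⟨fun h _ _ v ha hb => h (Relation.EqvGen.rel _ _ ⟨v, ha, hb⟩),
    fun h => Setoid.eqvGen_le fun a b ⟨v, ha, hb⟩ => h a b v ha hb⟩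

lemma Setoid.card_subtype_le_ker {α β : Type*} [Finite α] (r : Setoid α) :
    Nat.card {f : α → β // r ≤ Setoid.ker f} = Nat.card β ^ Nat.card (Quotient r) := by
  rw [Nat.card_congr (Setoid.liftEquiv r), Nat.card_fun]

section EdgeComponents

variable [DecidableEq V]

def incidentEdges (A : Finset (Sym2 V)) (v : V) : Finset A :=
  univ.filter fun e : A => v ∈ e.1

lemma card_incidentEdges (A : Finset (Sym2 V)) (v : V) : #(incidentEdges A v) = degIn A v := by
  simp only [incidentEdges, degIn, univ_eq_attach]
  exact (congrArg card (filter_attach (fun e => v ∈ e) A)).trans (by simp)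

lemma sum_degIn [Fintype V] {A : Finset (Sym2 V)} (hA : ∀ e ∈ A, ¬ e.IsDiag) :
    ∑ v, degIn A v = 2 * #A := by
  simp only [degIn, card_filter]
  rw [sum_comm, mul_comm, ← smul_eq_mul, ← sum_const]
  refine sum_congr rfl fun e he => ?_
  induction e using Sym2.ind with | h i j => ?_
  have hij : i ≠ j := fun h => hA _ he (by simp [h])
  rw [← card_filter, ← card_pair hij]
  congr 1
  ext
  simp [Sym2.mem_iff]

lemma degIn_le_degree [Fintype V] (G : SimpleGraph V) [DecidableRel G.Adj]
    {A : Finset (Sym2 V)} (hA : A ⊆ G.edgeFinset) (v : V) : degIn A v ≤ G.degree v := by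
  rw [← card_incidenceFinset_eq_degree, incidenceFinset_eq_filter]
  exact card_le_card (filter_subset_filter _ hA)

lemma SimpleGraph.Walk.IsCycle.edgeComponentSetoid_le_ker {H : SimpleGraph V} {u : V}
    {c : H.Walk u u} (hc : c.IsCycle) {A : Finset (Sym2 V)} (hcA : ∀ e ∈ c.edges, e ∈ A)
    (hA : ∀ v, degIn A v ≤ 2) :
    edgeComponentSetoid A ≤ Setoid.ker fun a : A => a.1 ∈ c.edges := by
  -- at a vertex of the cycle, the two cycle edges are all the edges of `A`
  have step : ∀ {e f : Sym2 V} {v : V}, e ∈ c.edges → v ∈ e → f ∈ A → v ∈ f → f ∈ c.edges := by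
    intro e f v he hve hf hvf
    obtain ⟨g, hg, hge, hvg⟩ := hc.exists_mem_edges_ne he hve
    have hsub : {e, g} ⊆ A.filter (v ∈ ·) := by
      simp [insert_subset_iff, hcA e he, hcA g hg, hve, hvg]
    have hfilter := eq_of_subset_of_card_le hsub ((hA v).trans (card_pair hge.symm).ge)
    have hf' : f ∈ ({e, g} : Finset (Sym2 V)) := hfilter ▸ mem_filter.2 ⟨hf, hvf⟩
    rcases mem_insert.1 hf' with rfl | hf'
    · exact he
    · rwa [mem_singleton.1 hf']
  refine edgeComponentSetoid_le_iff.2 fun a b v ha hb => ?_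
  exact propext ⟨fun h => step h ha b.2 hb, fun h => step h hb a.2 ha⟩

lemma cyclomatic_le_card_quotient {A : Finset (Sym2 V)} (hA : ∀ v, degIn A v ≤ 2) :
    cyclomatic A ≤ Nat.card (Quotient (edgeComponentSetoid A)) := by
  have := Fintype.ofFinite (Quotient (edgeComponentSetoid A))
  let B : Finset (Sym2 V) := univ.image fun x : Quotient (edgeComponentSetoid A) => x.out.1
  refine Nat.sInf_le ⟨B, fun e he => ?_, ?_, fun u c hc => ?_⟩
  · obtain ⟨x, -, rfl⟩ := mem_image.1 he
    exact x.out.2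
  · rw [card_image_of_injective _ fun x y h => Quotient.out_inj.1 (Subtype.ext h), card_univ,
      Nat.card_eq_fintype_card]
  · have hcAB : ∀ e ∈ c.edges, e ∈ A \ B := fun e he =>
      mem_coe.1 (edgeSet_fromEdgeSet _ ▸ c.edges_subset_edgeSet he).1
    obtain ⟨e, he⟩ := List.exists_mem_of_length_pos
      (by rw [c.length_edges]; linarith [hc.three_le_length])
    let a : A := ⟨e, (mem_sdiff.1 (hcAB e he)).1⟩
    have hout : (⟦a⟧ : Quotient (edgeComponentSetoid A)).out.1 ∈ c.edges := by
      have := hc.edgeComponentSetoid_le_ker (fun e he => (mem_sdiff.1 (hcAB e he)).1) hA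
        (Quotient.mk_out a)
      exact this.mpr he
    exact (mem_sdiff.1 (hcAB _ hout)).2 (mem_image_of_mem _ (mem_univ _))

lemma exists_mem_rel_of_isAcyclic [Finite V] {A B : Finset (Sym2 V)} (hA : ∀ e ∈ A, ¬ e.IsDiag)
    (heven : ∀ v, Even (degIn A v))
    (hB : (fromEdgeSet ((A \ B : Finset (Sym2 V)) : Set (Sym2 V))).IsAcyclic) (a : A) :
    ∃ b : A, b.1 ∈ B ∧ edgeComponentSetoid A a b := by
  by_contra! hcl
  let C : Set (Sym2 V) := {f | ∃ hf : f ∈ A, edgeComponentSetoid A a ⟨f, hf⟩}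
  have hCB : fromEdgeSet C ≤ fromEdgeSet ((A \ B : Finset (Sym2 V)) : Set (Sym2 V)) :=
    fromEdgeSet_mono fun f ⟨hf, haf⟩ => by simpa [hf] using fun hfB => hcl ⟨f, hf⟩ hfB haf
  have hCedge : (fromEdgeSet C).edgeSet.Nonempty :=
    ⟨a.1, by rw [edgeSet_fromEdgeSet]; exact ⟨⟨a.2, (edgeComponentSetoid A).refl' a⟩, hA a.1 a.2⟩⟩
  -- a leaf `v` of the class would have only one edge, but its `A`-degree is even and positive
  obtain ⟨v, w, hvw, huniq⟩ := (hB.anti hCB).exists_existsUnique_adj hCedge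
  obtain ⟨⟨hvwA, hrel⟩, -⟩ := (fromEdgeSet_adj _).1 hvw
  have hdeg : 1 < degIn A v := by
    have : 0 < degIn A v := card_pos.2 ⟨_, mem_filter.2 ⟨hvwA, Sym2.mem_mk_left v w⟩⟩
    obtain ⟨k, hk⟩ := heven v
    omega
  obtain ⟨f, hf, hfne⟩ := (one_lt_card_iff_nontrivial.1 hdeg).exists_ne s(v, w)
  obtain ⟨hfA, hvf⟩ := mem_filter.1 hf
  obtain ⟨w', rfl⟩ := Sym2.mem_iff_exists.1 hvf
  have hfC : s(v, w') ∈ C := ⟨hfA, (edgeComponentSetoid A).trans' hrel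
    (Relation.EqvGen.rel _ _ ⟨v, Sym2.mem_mk_left v w, Sym2.mem_mk_left v w'⟩)⟩
  have hvw' : v ≠ w' := fun h => hA _ hfA (by simp [h])
  exact hfne (by rw [huniq w' ((fromEdgeSet_adj _).2 ⟨hfC, hvw'⟩)])

lemma card_quotient_le_cyclomatic [Finite V] {A : Finset (Sym2 V)} (hA : ∀ e ∈ A, ¬ e.IsDiag)
    (heven : ∀ v, Even (degIn A v)) :
    Nat.card (Quotient (edgeComponentSetoid A)) ≤ cyclomatic A := by
  obtain ⟨B, -, hcard, hacyc⟩ := Nat.sInf_mem (s := {k | ∃ B ⊆ A, #B = k ∧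
      (fromEdgeSet ((A \ B : Finset (Sym2 V)) : Set (Sym2 V))).IsAcyclic})
    ⟨#A, A, subset_rfl, rfl, by simp⟩
  rw [cyclomatic, ← hcard, ← Nat.card_eq_finsetCard]
  choose g hgB hg using exists_mem_rel_of_isAcyclic hA heven hacyc
  refine Nat.card_le_card_of_injective (fun x => ⟨(g x.out).1, hgB _⟩) fun x y hxy => ?_
  rw [← Quotient.out_eq x, ← Quotient.out_eq y, Quotient.eq]
  have : g x.out = g y.out := Subtype.ext (by simpa using congrArg Subtype.val hxy)
  exact (edgeComponentSetoid A).trans' (hg _) (this ▸ (edgeComponentSetoid A).symm' (hg _))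

lemma cyclomatic_eq_card_quotient [Finite V] {A : Finset (Sym2 V)} (hA : ∀ e ∈ A, ¬ e.IsDiag)
    (heven : ∀ v, Even (degIn A v)) (hle : ∀ v, degIn A v ≤ 2) :
    cyclomatic A = Nat.card (Quotient (edgeComponentSetoid A)) :=
  (cyclomatic_le_card_quotient hle).antisymm (card_quotient_le_cyclomatic hA heven)

end EdgeComponents

lemma Finset.prod_three {α M : Type*} [DecidableEq α] [CommMonoid M] {a b d : α}
    (hab : a ≠ b) (had : a ≠ d) (hbd : b ≠ d) (f : α → M) :
    ∏ x ∈ {a, b, d}, f x = f a * f b * f d := by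
  rw [prod_insert (by simp [hab, had]), prod_pair hbd, mul_assoc]

section Moments

variable {n : ℕ} {μ : Measure (Fin n → ℝ)} {ι : Type*} [DecidableEq ι] {S : Finset ι}

lemma integrable_prod_coord [IsFiniteMeasure μ]
    (hint1 : ∀ α, Integrable (fun s : Fin n → ℝ => s α) μ)
    (hint2 : ∀ α β, Integrable (fun s : Fin n → ℝ => s α * s β) μ)
    (hint3 : ∀ α β γ, Integrable (fun s : Fin n → ℝ => s α * s β * s γ) μ)
    (hS : #S ≤ 3) (c : ι → Fin n) :
    Integrable (fun t : Fin n → ℝ => ∏ e ∈ S, t (c e)) μ := by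
  interval_cases h : #S
  · simp [card_eq_zero.1 h]
  · obtain ⟨a, rfl⟩ := card_eq_one.1 h
    simpa using hint1 (c a)
  · obtain ⟨a, b, hab, rfl⟩ := card_eq_two.1 h
    simpa [prod_pair hab] using hint2 (c a) (c b)
  · obtain ⟨a, b, d, hab, had, hbd, rfl⟩ := card_eq_three.1 h
    simpa [prod_three hab had hbd] using hint3 (c a) (c b) (c d)

lemma integral_prod_coord_of_odd (h1 : ∀ α, ∫ s, s α ∂μ = 0)
    (h3 : ∀ α β γ, ∫ s, s α * s β * s γ ∂μ = 0) (hS : #S ≤ 3) (hodd : Odd #S)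
    (c : ι → Fin n) : ∫ t, ∏ e ∈ S, t (c e) ∂μ = 0 := by
  obtain h | h : #S = 1 ∨ #S = 3 := by obtain ⟨k, hk⟩ := hodd; omega
  · obtain ⟨a, rfl⟩ := card_eq_one.1 h
    simpa using h1 (c a)
  · obtain ⟨a, b, d, hab, had, hbd, rfl⟩ := card_eq_three.1 h
    simpa [prod_three hab had hbd] using h3 (c a) (c b) (c d)

lemma integral_prod_coord_of_even [IsProbabilityMeasure μ]
    (h2 : ∀ α β, ∫ s, s α * s β ∂μ = if α = β then (1 : ℝ) / n else 0)
    (hS : #S ≤ 3) (heven : Even #S) (c : ι → Fin n) :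
    ∫ t, ∏ e ∈ S, t (c e) ∂μ =
      if ∀ a ∈ S, ∀ b ∈ S, c a = c b then (1 / n : ℝ) ^ (#S / 2) else 0 := by
  obtain h | h : #S = 0 ∨ #S = 2 := by obtain ⟨k, hk⟩ := heven; omega
  · simp [card_eq_zero.1 h]
  · obtain ⟨a, b, hab, rfl⟩ := card_eq_two.1 h
    have hconst : (∀ x ∈ ({a, b} : Finset ι), ∀ y ∈ ({a, b} : Finset ι), c x = c y) ↔ c a = c b :=
      ⟨fun h => h a (by simp) b (by simp), fun h => by simp [h]⟩
    simp only [prod_pair hab]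
    rw [h2, h, if_congr hconst rfl rfl]
    norm_num

end Moments

section SpinModel

variable [Fintype V] [DecidableEq V] {n : ℕ}

lemma lift_mul_coord_eq_prod (s : V → Fin n → ℝ) (α : Fin n) {e : Sym2 V} (he : ¬ e.IsDiag) :
    Sym2.lift ⟨fun i j => s i α * s j α, fun _ _ => mul_comm _ _⟩ e =
      ∏ v ∈ univ.filter (· ∈ e), s v α := by
  induction e using Sym2.ind with | h i j => ?_
  have hij : i ≠ j := fun h => he (by simp [h])
  rw [show univ.filter (· ∈ s(i, j)) = {i, j} by ext; simp [Sym2.mem_iff], prod_pair hij,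
    Sym2.lift_mk]

lemma prod_one_add_mul_dot_eq_sum {E : Finset (Sym2 V)} (hE : ∀ e ∈ E, ¬ e.IsDiag) (y : ℝ)
    (s : V → Fin n → ℝ) :
    ∏ e ∈ E, Sym2.lift ⟨fun i j => 1 + y * ∑ α, s i α * s j α, fun i j => by simp [mul_comm]⟩ e =
      ∑ A ∈ E.powerset, y ^ #A * ∑ c : A → Fin n, ∏ v, ∏ e ∈ incidentEdges A v, s v (c e) := by
  have hlift : ∀ e : Sym2 V,
      Sym2.lift ⟨fun i j => 1 + y * ∑ α, s i α * s j α, fun i j => by simp [mul_comm]⟩ e =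
        y * ∑ α, Sym2.lift ⟨fun i j => s i α * s j α, fun _ _ => mul_comm _ _⟩ e + 1 := by
    intro e
    induction e using Sym2.ind with | h i j => simp [add_comm]
  rw [prod_congr rfl fun e _ => hlift e, prod_add]
  refine sum_congr rfl fun A hA => ?_
  rw [prod_const_one, mul_one, prod_mul_distrib, prod_const, ← prod_coe_sort A, Fintype.prod_sum]
  congr 1
  refine sum_congr rfl fun c _ => ?_
  rw [prod_congr rfl fun e _ => lift_mul_coord_eq_prod s (c e) (hE _ (mem_powerset.1 hA e.2))]
  exact prod_comm' (by simp [incidentEdges])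

variable {μ : Measure (Fin n → ℝ)} [IsProbabilityMeasure μ] {A : Finset (Sym2 V)}

lemma integrable_prod_incidentEdges
    (hint1 : ∀ α, Integrable (fun s : Fin n → ℝ => s α) μ)
    (hint2 : ∀ α β, Integrable (fun s : Fin n → ℝ => s α * s β) μ)
    (hint3 : ∀ α β γ, Integrable (fun s : Fin n → ℝ => s α * s β * s γ) μ)
    (hdeg : ∀ v, degIn A v ≤ 3) (c : A → Fin n) :
    Integrable (fun s : V → Fin n → ℝ => ∏ v, ∏ e ∈ incidentEdges A v, s v (c e))
      (Measure.pi fun _ => μ) :=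
  Integrable.fintype_prod fun v =>
    integrable_prod_coord hint1 hint2 hint3 ((card_incidentEdges A v).trans_le (hdeg v)) c

open scoped Classical in
lemma prod_integral_incidentEdges_of_even
    (h2 : ∀ α β, ∫ s, s α * s β ∂μ = if α = β then (1 : ℝ) / n else 0)
    (hA : ∀ e ∈ A, ¬ e.IsDiag) (hdeg : ∀ v, degIn A v ≤ 3) (heven : ∀ v, Even (degIn A v))
    (c : A → Fin n) :
    ∏ v, ∫ t, ∏ e ∈ incidentEdges A v, t (c e) ∂μ =
      if edgeComponentSetoid A ≤ Setoid.ker c then (1 / n : ℝ) ^ #A else 0 := by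
  rw [prod_congr rfl fun v _ => integral_prod_coord_of_even h2
    ((card_incidentEdges A v).trans_le (hdeg v)) ((card_incidentEdges A v).symm ▸ heven v) c]
  simp only [Fintype.prod_ite_zero, card_incidentEdges]
  have hconst : (∀ v, ∀ a ∈ incidentEdges A v, ∀ b ∈ incidentEdges A v, c a = c b) ↔
      edgeComponentSetoid A ≤ Setoid.ker c := by
    rw [edgeComponentSetoid_le_iff]
    simp only [incidentEdges, mem_filter, mem_univ, true_and]
    exact ⟨fun h a b v ha hb => h v a ha b hb, fun h v a ha b hb => h a b v ha hb⟩
  have hsum : ∑ v, degIn A v / 2 = #A := by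
    have h2sum : 2 * ∑ v, degIn A v / 2 = ∑ v, degIn A v :=
      (mul_sum _ _ _).trans (sum_congr rfl fun v _ => Nat.mul_div_cancel' (heven v).two_dvd)
    have := sum_degIn hA
    omega
  rw [if_congr hconst (by rw [prod_pow_eq_pow_sum, hsum]) rfl]

lemma integral_sum_prod_incidentEdges
    (hint1 : ∀ α, Integrable (fun s : Fin n → ℝ => s α) μ)
    (hint2 : ∀ α β, Integrable (fun s : Fin n → ℝ => s α * s β) μ)
    (hint3 : ∀ α β γ, Integrable (fun s : Fin n → ℝ => s α * s β * s γ) μ)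
    (h1 : ∀ α, ∫ s, s α ∂μ = 0)
    (h2 : ∀ α β, ∫ s, s α * s β ∂μ = if α = β then (1 : ℝ) / n else 0)
    (h3 : ∀ α β γ, ∫ s, s α * s β * s γ ∂μ = 0)
    (hA : ∀ e ∈ A, ¬ e.IsDiag) (hdeg : ∀ v, degIn A v ≤ 3) :
    ∫ s, ∑ c : A → Fin n, ∏ v, ∏ e ∈ incidentEdges A v, s v (c e) ∂(Measure.pi fun _ => μ) =
      if ∀ v, Even (degIn A v) then (n : ℝ) ^ cyclomatic A * (1 / n) ^ #A else 0 := by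
  rw [integral_finsetSum _ fun c _ => integrable_prod_incidentEdges hint1 hint2 hint3 hdeg c]
  rw [sum_congr rfl fun c _ =>
    integral_fintype_prod_eq_prod (fun v (t : Fin n → ℝ) => ∏ e ∈ incidentEdges A v, t (c e))]
  split_ifs with heven
  · have hle : ∀ v, degIn A v ≤ 2 := fun v => by
      obtain ⟨k, hk⟩ := heven v
      have := hdeg v
      omega
    classical
    simp_rw [prod_integral_incidentEdges_of_even h2 hA hdeg heven, sum_ite, sum_const_zero,
      add_zero, sum_const, nsmul_eq_mul]
    rw [cyclomatic_eq_card_quotient hA heven hle, ← Fintype.card_subtype,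
      ← Nat.card_eq_fintype_card, Setoid.card_subtype_le_ker, Nat.card_fin, Nat.cast_pow]
  · obtain ⟨v, hv⟩ := not_forall.1 heven
    refine sum_eq_zero fun c _ => prod_eq_zero (mem_univ v) ?_
    exact integral_prod_coord_of_odd h1 h3 ((card_incidentEdges A v).trans_le (hdeg v))
      ((card_incidentEdges A v).symm ▸ Nat.not_even_iff_odd.1 hv) c

end SpinModel

/-- Let `G = (V, E)` be a finite graph of maximum degree 3, `n` a positive integer, `x`
real, and `μ` a probability measure on `ℝⁿ` whose moments satisfy `E[s^α] = 0`,
`E[s^α s^β] = δ_{αβ}/n` and `E[s^α s^β s^γ] = 0`.  If `(s_i)_{i ∈ V}` are i.i.d. with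
law `μ`, then `E[∏_{ij ∈ E} (1 + n x s_i · s_j)] = Σ_{A ∈ C(G)} n^{c(A)} x^{|A|}`. -/
theorem loop_expansion_of_spin_model
    [Fintype V] [DecidableEq V] (G : SimpleGraph V) [DecidableRel G.Adj]
    (hdeg : ∀ w, G.degree w ≤ 3)
    (n : ℕ) (hn : 0 < n) (x : ℝ)
    (μ : Measure (Fin n → ℝ)) [IsProbabilityMeasure μ]
    (hint1 : ∀ α, Integrable (fun s : Fin n → ℝ => s α) μ)
    (hint2 : ∀ α β, Integrable (fun s : Fin n → ℝ => s α * s β) μ)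
    (hint3 : ∀ α β γ, Integrable (fun s : Fin n → ℝ => s α * s β * s γ) μ)
    (h1 : ∀ α, ∫ s, s α ∂μ = 0)
    (h2 : ∀ α β, ∫ s, s α * s β ∂μ = if α = β then (1 : ℝ) / n else 0)
    (h3 : ∀ α β γ, ∫ s, s α * s β * s γ ∂μ = 0) :
    ∫ s : V → Fin n → ℝ,
        ∏ e ∈ G.edgeFinset,
          Sym2.lift ⟨fun i j => 1 + (n : ℝ) * x * ∑ α, s i α * s j α,
            fun i j => by simp [mul_comm]⟩ e
      ∂(Measure.pi fun _ : V => μ)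
      = ∑ A ∈ G.edgeFinset.powerset.filter (fun A => ∀ w, Even (degIn A w)),
          (n : ℝ) ^ cyclomatic A * x ^ A.card := by
  have hE : ∀ e ∈ G.edgeFinset, ¬ e.IsDiag := fun _ => not_isDiag_of_mem_edgeFinset
  have hdegA : ∀ A ∈ G.edgeFinset.powerset, ∀ v, degIn A v ≤ 3 := fun A hA v =>
    (degIn_le_degree G (mem_powerset.1 hA) v).trans (hdeg v)
  simp_rw [prod_one_add_mul_dot_eq_sum hE]
  rw [integral_finsetSum _ fun A hA => (integrable_finsetSum _ fun c _ =>
    integrable_prod_incidentEdges hint1 hint2 hint3 (hdegA A hA) c).const_mul _, sum_filter]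
  refine sum_congr rfl fun A hA => ?_
  rw [integral_const_mul, integral_sum_prod_incidentEdges hint1 hint2 hint3 h1 h2 h3
    (fun e he => hE e (mem_powerset.1 hA he)) (hdegA A hA)]
  split_ifs
  · rw [mul_left_comm, ← mul_pow, mul_right_comm, mul_one_div_cancel (Nat.cast_ne_zero.2 hn.ne'),
      one_mul]
  · simp
end

section
/- Let G=(V,E) be a finite graph of maximum degree 3, let n be a positive integer, and let x be a real number. If the spins (s_i)_{i∈V} are i.i.d. with the face-cubic a priori measure and M = Σ_{i∈V} s_i, then E[ |M|² ∏_{ij∈E}(1 + n x s_i·s_j) ] = Σ_{(A,u,v)∈S(G)} x^{|A|} n^{c(A)}. -/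
open SimpleGraph

variable {V : Type*}

/-- `A ∈ S_{u,v}(G)`: for `u ≠ v`, exactly `u` and `v` have odd degree in `(V, A)`;
for `u = v` this says that all degrees are even, i.e. `S_{v,v}(G) = C(G)`. -/
def inSuv [DecidableEq V] (A : Finset (Sym2 V)) (u v : V) : Prop :=
  ∀ w, Odd (degIn A w) ↔ (u ≠ v ∧ (w = u ∨ w = v))

open scoped Classical in
/-- The state space `S(G)` of the worm dynamics: all ordered triples `(A, u, v)` with
`A ⊆ E` and `A ∈ S_{u,v}(G)`. -/
noncomputable def SGfinset [Fintype V] [DecidableEq V] (G : SimpleGraph V)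
    [DecidableRel G.Adj] : Finset (Finset (Sym2 V) × V × V) :=
  (G.edgeFinset.powerset ×ˢ Finset.univ ×ˢ Finset.univ).filter
    fun p => inSuv p.1 p.2.1 p.2.2

/-- The face-cubic spin associated to a pair `(α, ±)`: the unit vector `± e_α ∈ ℝⁿ`. -/
def fcSpin (n : ℕ) (p : Fin n × Bool) : Fin n → ℝ :=
  Pi.single p.1 (if p.2 then 1 else -1)

/-!
Expanding `|M|² = ∑_{u,v} s_u · s_v` and `∏_{ij ∈ E} (1 + n x s_i · s_j)` over subsets `A ⊆ E`,
each term is `(n x)^|A| E[s_u · s_v ∏_{ij ∈ A} s_i · s_j]`. Writing `s_i = ε_i e_{α_i}`, this moment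
factors into an average over the signs `ε`, equal to `1` if every vertex has even degree in `A + uv`
(that is, `A ∈ S_{u,v}`) and `0` otherwise, times the proportion `n^(k(A) - |V|)` of colourings `α`
constant on the components of `A + uv`; here `k` counts components, and `u`, `v` are already
connected in `A`. Since `c(A) = |A| - |V| + k(A)`, the term is `x^|A| n^c(A)`.
-/

open Finset

namespace SimpleGraph

variable {G H : SimpleGraph V} {u v x y : V}

theorem reachable_sup_edge_iff :
    (G ⊔ edge u v).Reachable x y ↔ G.Reachable x y ∨
      (G.Reachable x u ∧ G.Reachable v y) ∨ (G.Reachable x v ∧ G.Reachable u y) := by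
  constructor
  · rintro ⟨p⟩
    induction p with
    | nil => exact Or.inl .rfl
    | cons hadj _ ih =>
      rcases hadj with hadj | hadj
      · have h := hadj.reachable
        rcases ih with h1 | ⟨h1, h2⟩ | ⟨h1, h2⟩
        exacts [Or.inl (h.trans h1), Or.inr (Or.inl ⟨h.trans h1, h2⟩),
          Or.inr (Or.inr ⟨h.trans h1, h2⟩)]
      · obtain ⟨⟨rfl, rfl⟩ | ⟨rfl, rfl⟩, -⟩ := (edge_adj _ _ _ _).1 hadj
        · rcases ih with h1 | ⟨h1, h2⟩ | ⟨-, h2⟩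
          exacts [Or.inr (Or.inl ⟨.rfl, h1⟩), Or.inr (Or.inl ⟨.rfl, h2⟩), Or.inl h2]
        · rcases ih with h1 | ⟨-, h2⟩ | ⟨h1, h2⟩
          exacts [Or.inr (Or.inr ⟨.rfl, h1⟩), Or.inl h2, Or.inr (Or.inr ⟨.rfl, h2⟩)]
  · have hle : G ≤ G ⊔ edge u v := le_sup_left
    have huv : (G ⊔ edge u v).Reachable u v := by
      by_cases h : u = v
      · exact h ▸ .rfl
      · exact Adj.reachable (Or.inr ((edge_adj _ _ _ _).2 ⟨Or.inl ⟨rfl, rfl⟩, h⟩))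
    rintro (h | ⟨h1, h2⟩ | ⟨h1, h2⟩)
    exacts [h.mono hle, ((h1.mono hle).trans huv).trans (h2.mono hle),
      ((h1.mono hle).trans huv.symm).trans (h2.mono hle)]

theorem reachable_sup_edge_eq (h : G.Reachable u v) :
    (G ⊔ edge u v).Reachable = G.Reachable := by
  ext x y
  rw [reachable_sup_edge_iff]
  constructor
  · rintro (h' | ⟨h1, h2⟩ | ⟨h1, h2⟩)
    exacts [h', (h1.trans h).trans h2, (h1.trans h.symm).trans h2]
  · exact Or.inl

theorem card_connectedComponent_eq_of_reachable_eq (h : G.Reachable = H.Reachable) :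
    Nat.card G.ConnectedComponent = Nat.card H.ConnectedComponent := by
  change Nat.card (Quot G.Reachable) = Nat.card (Quot H.Reachable)
  rw [h]

theorem card_connectedComponent_bot :
    Nat.card (⊥ : SimpleGraph V).ConnectedComponent = Nat.card V :=
  (Nat.card_eq_of_bijective _ ⟨fun _ _ h => reachable_bot.1 (ConnectedComponent.exact h),
    fun c => c.ind fun x => ⟨x, rfl⟩⟩).symm

/-- The components of `G` other than that of `v` map bijectively onto those of `G ⊔ edge u v`. -/
theorem card_connectedComponent_sup_edge_add_one [Finite V] (h : ¬ G.Reachable u v) :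
    Nat.card (G ⊔ edge u v).ConnectedComponent + 1 = Nat.card G.ConnectedComponent := by
  classical
  let φ : G.ConnectedComponent → (G ⊔ edge u v).ConnectedComponent :=
    ConnectedComponent.map (Hom.ofLE le_sup_left)
  have hbij : Function.Bijective fun c : {c // c ≠ G.connectedComponentMk v} => φ c := by
    refine ⟨fun ⟨c₁, hc₁⟩ ⟨c₂, hc₂⟩ hc => ?_, fun c => ?_⟩
    · induction c₁ using ConnectedComponent.ind
      induction c₂ using ConnectedComponent.ind
      simp only [φ, ConnectedComponent.map_mk, ConnectedComponent.eq, ne_eq, Subtype.mk.injEq,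
        Hom.coe_ofLE, id] at hc hc₁ hc₂ ⊢
      rcases reachable_sup_edge_iff.1 hc with hc | ⟨-, hc⟩ | ⟨hc, -⟩
      exacts [hc, absurd hc.symm hc₂, absurd hc hc₁]
    · induction c using ConnectedComponent.ind with | h x => ?_
      by_cases hx : G.Reachable x v
      · refine ⟨⟨G.connectedComponentMk u, fun hu => h (ConnectedComponent.exact hu)⟩, ?_⟩
        simp only [φ, ConnectedComponent.map_mk, ConnectedComponent.eq, Hom.coe_ofLE, id]
        exact reachable_sup_edge_iff.2 (Or.inr (Or.inl ⟨.rfl, hx.symm⟩))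
      · exact ⟨⟨G.connectedComponentMk x, fun hx' => hx (ConnectedComponent.exact hx')⟩, rfl⟩
  have := Fintype.ofFinite V
  rw [← Nat.card_eq_of_bijective _ hbij, Nat.card_eq_fintype_card, Nat.card_eq_fintype_card,
    Fintype.card_subtype_compl, Fintype.card_subtype_eq]
  exact Nat.sub_add_cancel (Fintype.card_pos_iff.2 ⟨G.connectedComponentMk v⟩)

theorem Reachable.apply_eq_of_forall_adj {κ : Type*} {α : V → κ}
    (hα : ∀ v w, G.Adj v w → α v = α w) (h : G.Reachable x y) : α x = α y := by
  obtain ⟨p⟩ := h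
  induction p with
  | nil => rfl
  | cons hadj _ ih => exact (hα _ _ hadj).trans ih

def componentFunEquiv (κ : Type*) :
    {α : V → κ // ∀ v w, G.Adj v w → α v = α w} ≃ (G.ConnectedComponent → κ) where
  toFun α := ConnectedComponent.lift α.1 fun _ _ p _ => p.reachable.apply_eq_of_forall_adj α.2
  invFun f := ⟨fun v => f (G.connectedComponentMk v),
    fun _ _ hadj => congrArg f (ConnectedComponent.sound hadj.reachable)⟩
  left_inv _ := rfl
  right_inv _ := funext fun c => c.ind fun _ => rfl

end SimpleGraph

noncomputable def numComponents (A : Finset (Sym2 V)) : ℕ :=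
  Nat.card (fromEdgeSet (A : Set (Sym2 V))).ConnectedComponent

section EdgeFinset

variable {A : Finset (Sym2 V)}

theorem fromEdgeSet_insert_mk [DecidableEq V] (u v : V) :
    fromEdgeSet ((insert s(u, v) A : Finset (Sym2 V)) : Set (Sym2 V)) =
      fromEdgeSet (A : Set (Sym2 V)) ⊔ edge u v := by
  rw [coe_insert, Set.insert_eq, fromEdgeSet_union, sup_comm, edge]

theorem numComponents_insert_of_reachable [DecidableEq V] {u v : V}
    (h : (fromEdgeSet (A : Set (Sym2 V))).Reachable u v) :
    numComponents (insert s(u, v) A) = numComponents A := by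
  rw [numComponents, fromEdgeSet_insert_mk]
  exact card_connectedComponent_eq_of_reachable_eq (reachable_sup_edge_eq h)

variable [Fintype V]

theorem numComponents_le_of_subset {B : Finset (Sym2 V)} (h : B ⊆ A) :
    numComponents A ≤ numComponents B :=
  ConnectedComponent.card_le_card_of_le (fromEdgeSet_mono (coe_subset.2 h))

theorem card_add_numComponents_of_isAcyclic [DecidableEq V] (hA : ∀ e ∈ A, ¬ e.IsDiag)
    (hacyc : (fromEdgeSet (A : Set (Sym2 V))).IsAcyclic) :
    #A + numComponents A = Fintype.card V := by
  induction A using Finset.induction_on with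
  | empty =>
    rw [numComponents, coe_empty, fromEdgeSet_empty, card_connectedComponent_bot,
      Nat.card_eq_fintype_card, card_empty, zero_add]
  | @insert e A he ih =>
    induction e using Sym2.ind with | h a b => ?_
    have hab : a ≠ b := fun h => hA _ (mem_insert_self _ _) (Sym2.mk_isDiag_iff.2 h)
    rw [fromEdgeSet_insert_mk, isAcyclic_sup_fromEdgeSet_iff] at hacyc
    have hnr : ¬ (fromEdgeSet (A : Set (Sym2 V))).Reachable a b := fun hr =>
      (hacyc.2 hr).elim hab fun hadj => he ((fromEdgeSet_adj _).1 hadj).1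
    have hmerge := card_connectedComponent_sup_edge_add_one hnr
    rw [numComponents, fromEdgeSet_insert_mk, card_insert_of_notMem he,
      ← ih (fun e he' => hA e (mem_insert_of_mem he')) hacyc.1, numComponents, ← hmerge]
    ring

/-- The optimal edge sets to delete are the complements of spanning forests. -/
theorem cyclomatic_add_card [DecidableEq V] (hA : ∀ e ∈ A, ¬ e.IsDiag) :
    cyclomatic A + Fintype.card V = #A + numComponents A := by
  classical
  obtain ⟨F, hFle, hFacyc, hFreach⟩ :=
    (fromEdgeSet (A : Set (Sym2 V))).exists_isAcyclic_reachable_eq_le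
  have hFA : F.edgeFinset ⊆ A := fun e he => by
    have := edgeSet_mono hFle (mem_edgeFinset.1 he)
    exact_mod_cast (edgeSet_fromEdgeSet _ ▸ this).1
  have hFcomp : numComponents F.edgeFinset = numComponents A := by
    rw [numComponents, coe_edgeFinset, fromEdgeSet_edgeSet]
    exact card_connectedComponent_eq_of_reachable_eq hFreach
  have hforest := card_add_numComponents_of_isAcyclic
    (fun e he => F.not_isDiag_of_mem_edgeSet (mem_edgeFinset.1 he))
    (by rwa [coe_edgeFinset, fromEdgeSet_edgeSet])
  have hleast : IsLeast {k | ∃ B ⊆ A, #B = k ∧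
      (fromEdgeSet ((A \ B : Finset (Sym2 V)) : Set (Sym2 V))).IsAcyclic}
      (#A - #F.edgeFinset) := by
    refine ⟨⟨A \ F.edgeFinset, sdiff_subset, card_sdiff_of_subset hFA, ?_⟩, ?_⟩
    · rwa [Finset.sdiff_sdiff_eq_self hFA, coe_edgeFinset, fromEdgeSet_edgeSet]
    · rintro _ ⟨B, hBA, rfl, hacyc⟩
      have := card_add_numComponents_of_isAcyclic (fun e he => hA e (mem_sdiff.1 he).1) hacyc
      have := numComponents_le_of_subset (sdiff_subset : A \ B ⊆ A)
      have := card_sdiff_of_subset hBA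
      have := card_le_card hBA
      omega
  rw [cyclomatic, hleast.csInf_eq]
  have := card_le_card hFA
  omega

end EdgeFinset

section Parity

variable [DecidableEq V] {A : Finset (Sym2 V)} {u v : V}

theorem even_sum_degIn_of_closed (hA : ∀ e ∈ A, ¬ e.IsDiag) {R : Finset V}
    (hR : ∀ a b, s(a, b) ∈ A → a ∈ R → b ∈ R) : Even (∑ w ∈ R, degIn A w) := by
  have hswap : ∑ w ∈ R, degIn A w = ∑ e ∈ A, #(R.filter (· ∈ e)) :=
    sum_card_bipartiteAbove_eq_sum_card_bipartiteBelow (fun w e => w ∈ e)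
  rw [hswap]
  refine even_sum _ fun e he => ?_
  induction e using Sym2.ind with | h a b => ?_
  have hab : a ≠ b := fun h => hA _ he (Sym2.mk_isDiag_iff.2 h)
  by_cases ha : a ∈ R
  · have hb := hR a b he ha
    rw [show R.filter (· ∈ s(a, b)) = {a, b} by
      ext w; simp only [mem_filter, Sym2.mem_iff, mem_insert, mem_singleton]; grind,
      card_pair hab]
    exact even_two
  · have hb : b ∉ R := fun hb => ha (hR b a (Sym2.eq_swap ▸ he) hb)
    rw [show R.filter (· ∈ s(a, b)) = ∅ by
      ext w; simp only [mem_filter, Sym2.mem_iff, notMem_empty, iff_false]; grind,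
      card_empty]
    exact Even.zero

/-- The vertices of odd degree in the component of `u` would be `u` alone, contradicting the
handshake lemma in that component. -/
theorem reachable_of_inSuv [Fintype V] (hA : ∀ e ∈ A, ¬ e.IsDiag) (h : inSuv A u v) :
    (fromEdgeSet (A : Set (Sym2 V))).Reachable u v := by
  classical
  by_contra huv
  let R := univ.filter ((fromEdgeSet (A : Set (Sym2 V))).Reachable u)
  have hclosed : ∀ a b, s(a, b) ∈ A → a ∈ R → b ∈ R := fun a b hab ha => by
    simp only [R, mem_filter, mem_univ, true_and] at ha ⊢
    by_cases h : a = b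
    · exact h ▸ ha
    · exact ha.trans ((fromEdgeSet_adj _).2 ⟨hab, h⟩).reachable
  have hodd : R.filter (fun w => Odd (degIn A w)) = {u} := by
    ext w
    simp only [R, mem_filter, mem_univ, true_and, mem_singleton, h w]
    constructor
    · rintro ⟨hw, -, rfl | rfl⟩
      exacts [rfl, absurd hw huv]
    · rintro rfl
      exact ⟨.rfl, fun h => huv (h ▸ .rfl), Or.inl rfl⟩
  have := (even_sum_iff_even_card_odd _).1 (even_sum_degIn_of_closed hA hclosed)
  rw [hodd, card_singleton] at this
  exact Nat.not_even_one this

theorem even_degIn_add_iff_inSuv :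
    (∀ w, Even (degIn A w + (if u = w then 1 else 0) + (if v = w then 1 else 0))) ↔
      inSuv A u v := by
  refine forall_congr' fun w => ?_
  rw [← Nat.not_odd_iff_even]
  split_ifs <;> grind [Nat.odd_add_one]

end Parity

section SpinSums

variable [Fintype V] [DecidableEq V]

theorem prod_lift_mul_eq_prod_pow_degIn {M : Type*} [CommMonoid M] (f : V → M)
    {A : Finset (Sym2 V)} (hA : ∀ e ∈ A, ¬ e.IsDiag) :
    ∏ e ∈ A, Sym2.lift ⟨fun i j => f i * f j, fun _ _ => mul_comm _ _⟩ e =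
      ∏ w, f w ^ degIn A w := by
  have hpow : ∀ w, f w ^ degIn A w = ∏ e ∈ A, if w ∈ e then f w else 1 := fun w => by
    rw [degIn, ← prod_const, prod_filter]
  simp_rw [hpow]
  rw [prod_comm]
  refine prod_congr rfl fun e he => ?_
  induction e using Sym2.ind with | h a b => ?_
  have hab : a ≠ b := fun h => hA _ he (Sym2.mk_isDiag_iff.2 h)
  rw [← prod_filter, show univ.filter (· ∈ s(a, b)) = {a, b} by ext; simp, prod_pair hab,
    Sym2.lift_mk]

theorem sum_prod_boole_isDiag_map (n : ℕ) (T : Finset (Sym2 V)) :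
    ∑ α : V → Fin n, ∏ e ∈ T, (if (e.map α).IsDiag then 1 else 0 : ℝ) =
      (n : ℝ) ^ numComponents T := by
  have hprod : ∀ α : V → Fin n, ∏ e ∈ T, (if (e.map α).IsDiag then 1 else 0 : ℝ) =
      if ∀ e ∈ T, (e.map α).IsDiag then 1 else 0 := fun _ => by
    simp only [Finset.prod_boole]; congr
  simp_rw [hprod, Finset.sum_boole]
  have hmono : ∀ α : V → Fin n, (∀ e ∈ T, (e.map α).IsDiag) ↔
      ∀ v w, (fromEdgeSet (T : Set (Sym2 V))).Adj v w → α v = α w := fun α => by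
    refine ⟨fun h v w hvw => by simpa using h _ ((fromEdgeSet_adj _).1 hvw).1, fun h e he => ?_⟩
    induction e using Sym2.ind with | h v w => ?_
    by_cases hvw : v = w
    · rw [Sym2.map_mk, Sym2.mk_isDiag_iff, hvw]
    · simpa using h v w ((fromEdgeSet_adj _).2 ⟨he, hvw⟩)
  rw [← Fintype.card_subtype, ← Nat.card_eq_fintype_card,
    Nat.card_congr ((Equiv.subtypeEquivRight hmono).trans (componentFunEquiv _)), Nat.card_fun,
    Nat.card_eq_fintype_card (α := Fin n), Fintype.card_fin, numComponents, Nat.cast_pow]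

theorem boole_mul_prod_boole_eq_prod_insert {ι M : Type*} [DecidableEq ι] [CommMonoidWithZero M]
    (p : ι → Prop) [DecidablePred p] (A : Finset ι) (i : ι) :
    ((if p i then 1 else 0 : M) * ∏ j ∈ A, if p j then 1 else 0) =
      ∏ j ∈ insert i A, if p j then 1 else 0 := by
  by_cases hi : i ∈ A
  · rw [insert_eq_of_mem hi, ← mul_prod_erase _ _ hi, ← mul_assoc]
    congr 1
    split_ifs <;> simp
  · rw [prod_insert hi]

def boolSign (b : Bool) : ℝ := if b then 1 else -1

theorem sum_prod_boolSign_pow (d : V → ℕ) :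
    ∑ b : V → Bool, ∏ w, boolSign (b w) ^ d w =
      if ∀ w, Even (d w) then (2 : ℝ) ^ Fintype.card V else 0 := by
  have hsum : ∀ k : ℕ, ∑ c : Bool, boolSign c ^ k = if Even k then 2 else 0 := fun k => by
    rcases Nat.even_or_odd k with hk | hk <;>
      simp [boolSign, hk.neg_one_pow, Nat.not_even_iff_odd.2, hk]
  rw [← Fintype.prod_sum fun w (c : Bool) => boolSign c ^ d w,
    Fintype.prod_congr _ _ fun w => hsum (d w), Fintype.prod_ite_zero, prod_const, card_univ]

end SpinSums

section FaceCubic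

variable {n : ℕ}

theorem sum_fcSpin_mul_fcSpin (p q : Fin n × Bool) :
    ∑ α, fcSpin n p α * fcSpin n q α =
      (if p.1 = q.1 then 1 else 0) * (boolSign p.2 * boolSign q.2) := by
  have hspin : ∀ r : Fin n × Bool, fcSpin n r = Pi.single r.1 (boolSign r.2) := fun _ => rfl
  rw [sum_eq_single p.1 (fun β _ hβ => by simp [hspin, hβ]) (by simp)]
  by_cases h : p.1 = q.1 <;> simp [hspin, h]

def fcSpinDot (σ : V → Fin n × Bool) : Sym2 V → ℝ :=
  Sym2.lift ⟨fun i j => ∑ α, fcSpin n (σ i) α * fcSpin n (σ j) α, fun i j => by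
    simp only [mul_comm]⟩

theorem fcSpinDot_eq_boole_mul (σ : V → Fin n × Bool) (e : Sym2 V) :
    fcSpinDot σ e = (if (e.map (Prod.fst ∘ σ)).IsDiag then 1 else 0) *
      Sym2.lift ⟨fun i j => boolSign (σ i).2 * boolSign (σ j).2, fun _ _ => mul_comm _ _⟩ e :=
  e.ind fun i j => by simp [fcSpinDot, sum_fcSpin_mul_fcSpin]

theorem sum_sq_sum_fcSpin_mul_prod_one_add [Fintype V] (σ : V → Fin n × Bool)
    (E : Finset (Sym2 V)) (c : ℝ) :
    (∑ α, (∑ i, fcSpin n (σ i) α) ^ 2) *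
      ∏ e ∈ E, Sym2.lift ⟨fun i j => 1 + c * ∑ α, fcSpin n (σ i) α * fcSpin n (σ j) α,
        fun i j => by simp [mul_comm]⟩ e =
    ∑ p ∈ E.powerset ×ˢ univ ×ˢ univ,
      c ^ #p.1 * (fcSpinDot σ s(p.2.1, p.2.2) * ∏ e ∈ p.1, fcSpinDot σ e) := by
  have hM : ∑ α, (∑ i, fcSpin n (σ i) α) ^ 2 = ∑ u, ∑ v, fcSpinDot σ s(u, v) := by
    simp_rw [sq, sum_mul_sum]
    rw [sum_comm]
    exact sum_congr rfl fun _ _ => sum_comm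
  have hedge : ∀ e, Sym2.lift ⟨fun i j => 1 + c * ∑ α, fcSpin n (σ i) α * fcSpin n (σ j) α,
      fun i j => by simp [mul_comm]⟩ e = 1 + c * fcSpinDot σ e := fun e => e.ind fun _ _ => rfl
  rw [hM, prod_congr rfl fun e _ => hedge e, prod_one_add, mul_comm, sum_mul, sum_product]
  refine sum_congr rfl fun A _ => ?_
  rw [prod_mul_distrib, prod_const, sum_product, mul_sum]
  exact sum_congr rfl fun u _ => by rw [mul_sum]; exact sum_congr rfl fun v _ => by ring

variable [Fintype V] [DecidableEq V]

/-- Colours and signs separate; the colour constraint of the extra factor `s_u · s_v` is that of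
an extra edge `uv`. -/
theorem fcSpinDot_mul_prod_fcSpinDot (σ : V → Fin n × Bool) {A : Finset (Sym2 V)}
    (hA : ∀ e ∈ A, ¬ e.IsDiag) (u v : V) :
    fcSpinDot σ s(u, v) * ∏ e ∈ A, fcSpinDot σ e =
      (∏ e ∈ insert s(u, v) A, if (e.map (Prod.fst ∘ σ)).IsDiag then 1 else 0) *
        ∏ w, boolSign (σ w).2 ^
          (degIn A w + (if u = w then 1 else 0) + (if v = w then 1 else 0)) := by
  simp_rw [fcSpinDot_eq_boole_mul, prod_mul_distrib, prod_lift_mul_eq_prod_pow_degIn _ hA,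
    pow_add, prod_mul_distrib, prod_pow_boole, mem_univ, if_true, Sym2.lift_mk,
    ← boole_mul_prod_boole_eq_prod_insert]
  ring

open scoped Classical in
theorem sum_fcSpinDot_mul_prod_fcSpinDot {A : Finset (Sym2 V)} (hA : ∀ e ∈ A, ¬ e.IsDiag)
    (u v : V) :
    ∑ σ : V → Fin n × Bool, fcSpinDot σ s(u, v) * ∏ e ∈ A, fcSpinDot σ e =
      if inSuv A u v then (2 : ℝ) ^ Fintype.card V * (n : ℝ) ^ numComponents A else 0 := by
  simp_rw [fcSpinDot_mul_prod_fcSpinDot _ hA]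
  rw [← (Equiv.arrowProdEquivProdArrow V (fun _ => Fin n) (fun _ => Bool)).symm.sum_comp,
    Fintype.sum_prod_type]
  change ∑ α : V → Fin n, ∑ b : V → Bool, (∏ e ∈ insert s(u, v) A,
      if (e.map α).IsDiag then (1 : ℝ) else 0) * ∏ w, boolSign (b w) ^ _ = _
  rw [← sum_mul_sum, sum_prod_boole_isDiag_map, sum_prod_boolSign_pow]
  simp_rw [even_degIn_add_iff_inSuv]
  split_ifs with h
  · rw [numComponents_insert_of_reachable (reachable_of_inSuv hA h), mul_comm]
  · rw [mul_zero]

open scoped Classical in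
theorem normalized_sum_fcSpinDot_mul_prod_fcSpinDot {A : Finset (Sym2 V)}
    (hA : ∀ e ∈ A, ¬ e.IsDiag) (hn : n ≠ 0) (x : ℝ) (u v : V) :
    (1 / (2 * n : ℝ)) ^ Fintype.card V * ((n * x) ^ #A *
        ∑ σ : V → Fin n × Bool, fcSpinDot σ s(u, v) * ∏ e ∈ A, fcSpinDot σ e) =
      if inSuv A u v then x ^ #A * (n : ℝ) ^ cyclomatic A else 0 := by
  rw [sum_fcSpinDot_mul_prod_fcSpinDot hA]
  split_ifs
  swap
  · rw [mul_zero, mul_zero]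
  set N := Fintype.card V
  have hpow : (n : ℝ) ^ cyclomatic A * (n : ℝ) ^ N = (n : ℝ) ^ #A * (n : ℝ) ^ numComponents A := by
    rw [← pow_add, ← pow_add, cyclomatic_add_card hA]
  have hone : (1 / (2 * n : ℝ)) ^ N * 2 ^ N * (n : ℝ) ^ N = 1 := by
    have hn' : (n : ℝ) ≠ 0 := Nat.cast_ne_zero.2 hn
    rw [← mul_pow, ← mul_pow, show 1 / (2 * n : ℝ) * 2 * n = 1 by field_simp, one_pow]
  calc (1 / (2 * n : ℝ)) ^ N * ((n * x) ^ #A * (2 ^ N * (n : ℝ) ^ numComponents A))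
      = x ^ #A * ((n : ℝ) ^ #A * (n : ℝ) ^ numComponents A) * ((1 / (2 * n : ℝ)) ^ N * 2 ^ N) := by
        ring
    _ = x ^ #A * (n : ℝ) ^ cyclomatic A * ((1 / (2 * n : ℝ)) ^ N * 2 ^ N * (n : ℝ) ^ N) := by
        rw [← hpow]; ring
    _ = x ^ #A * (n : ℝ) ^ cyclomatic A := by rw [hone, mul_one]

end FaceCubic

/-- Let `G = (V, E)` be a finite graph of maximum degree 3, `n` a positive integer and
`x` real.  If the spins `(s_i)_{i ∈ V}` are i.i.d. with the face-cubic a priori measure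
and `M = Σ_{i ∈ V} s_i`, then
`E[|M|² ∏_{ij ∈ E} (1 + n x s_i · s_j)] = Σ_{(A,u,v) ∈ S(G)} x^{|A|} n^{c(A)}`. -/
theorem face_cubic_magnetization_expansion
    [Fintype V] [DecidableEq V] (G : SimpleGraph V) [DecidableRel G.Adj]
    (n : ℕ) (hn : 0 < n) (x : ℝ) :
    (1 / (2 * n : ℝ)) ^ Fintype.card V *
      ∑ σ : V → Fin n × Bool,
        (∑ α, (∑ i, fcSpin n (σ i) α) ^ 2) *
        ∏ e ∈ G.edgeFinset,
          Sym2.lift ⟨fun i j => 1 + (n : ℝ) * x * ∑ α, fcSpin n (σ i) α * fcSpin n (σ j) α,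
            fun i j => by simp [mul_comm]⟩ e
      = ∑ p ∈ SGfinset G, x ^ p.1.card * (n : ℝ) ^ cyclomatic p.1 := by
  classical
  simp_rw [sum_sq_sum_fcSpin_mul_prod_one_add]
  rw [sum_comm, mul_sum, SGfinset, sum_filter]
  refine sum_congr rfl fun p hp => ?_
  have hloop : ∀ e ∈ p.1, ¬ e.IsDiag := fun e he =>
    G.not_isDiag_of_mem_edgeSet (mem_edgeFinset.1 (mem_powerset.1 (mem_product.1 hp).1 he))
  rw [← mul_sum]
  exact normalized_sum_fcSpinDot_mul_prod_fcSpinDot hloop hn.ne' x p.2.1 p.2.2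
end
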